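/- Let H be the group presented by generators ξ₁, ξ₂, w, z with relations ξ₁³ = ξ₂³ = z³ = w² = 1, z central, ξ₂ξ₁ = z⁻¹ξ₁ξ₂, wξ₁w⁻¹ = ξ₁⁻¹, wξ₂w⁻¹ = ξ₂⁻¹. Then H has order 54. -/

import Mathlib

/-!
Writing `z ^ t * ξ₂ ^ y * ξ₁ ^ x * w ^ s` with `x, y, t ∈ 𝔽₃`, `s ∈ 𝔽₂` gives at most 54 elements,
and left multiplication by each generator permutes these words exactly as it permutes the
elements of the semidirect product of the Heisenberg group over `𝔽₃` with `C₂` (acting by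
inversion on `ξ₁, ξ₂`). That group satisfies the relations, so the induced map to it has the
normal-form map as a two-sided inverse.
-/

namespace Stmt5

/-- Free-group generators: `ξ₁, ξ₂, w, z`. -/
private def ξ₁ : FreeGroup (Fin 4) := FreeGroup.of 0
private def ξ₂ : FreeGroup (Fin 4) := FreeGroup.of 1
private def w : FreeGroup (Fin 4) := FreeGroup.of 2
private def z : FreeGroup (Fin 4) := FreeGroup.of 3

/-- Relators: `ξ₁³ = ξ₂³ = z³ = w² = 1`, `z` central,
`ξ₂ξ₁ = z⁻¹ξ₁ξ₂`, `wξ₁w⁻¹ = ξ₁⁻¹`, `wξ₂w⁻¹ = ξ₂⁻¹`. -/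
def rels : Set (FreeGroup (Fin 4)) :=
  {ξ₁ ^ 3, ξ₂ ^ 3, z ^ 3, w ^ 2,
   z * ξ₁ * z⁻¹ * ξ₁⁻¹, z * ξ₂ * z⁻¹ * ξ₂⁻¹, z * w * z⁻¹ * w⁻¹,
   ξ₂ * ξ₁ * (z⁻¹ * ξ₁ * ξ₂)⁻¹,
   w * ξ₁ * w⁻¹ * ξ₁, w * ξ₂ * w⁻¹ * ξ₂}

theorem bijective_of_equivariant_section {ι G K : Type*} [Group G] [Group K] (φ : K →* G)
    {x : ι → K} (hx : Subgroup.closure (Set.range x) = ⊤) {s : G → K} (hs_one : s 1 = 1)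
    (hφs : ∀ g, φ (s g) = g) (hxs : ∀ i g, x i * s g = s (φ (x i) * g)) :
    Function.Bijective φ := by
  have hequiv (k : K) : ∀ g, k * s g = s (φ k * g) := by
    induction (hx ▸ Subgroup.mem_top k : k ∈ Subgroup.closure (Set.range x))
      using Subgroup.closure_induction with
    | mem _ hk => obtain ⟨i, rfl⟩ := hk; exact hxs i
    | one => simp
    | mul k l _ _ hk hl => intro g; rw [mul_assoc, hl, hk, map_mul, mul_assoc]
    | inv k _ hk => intro g; rw [inv_mul_eq_iff_eq_mul, hk, map_inv, mul_inv_cancel_left]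
  have hsφ : Function.LeftInverse s φ := fun k => by simpa [hs_one] using (hequiv k 1).symm
  exact ⟨hsφ.injective, Function.RightInverse.surjective hφs⟩

theorem pow_val_add {M : Type*} [Monoid M] {n : ℕ} [NeZero n] {g : M} (hg : g ^ n = 1)
    (a b : ZMod n) : g ^ (a + b).val = g ^ a.val * g ^ b.val := by
  rw [ZMod.val_add, ← pow_eq_pow_mod _ hg, pow_add]

theorem pow_val_neg {G : Type*} [Group G] {n : ℕ} [NeZero n] {g : G} (hg : g ^ n = 1)
    (a : ZMod n) : g ^ (-a).val = (g ^ a.val)⁻¹ :=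
  eq_inv_of_mul_eq_one_left <| by rw [← pow_val_add hg, neg_add_cancel, ZMod.val_zero, pow_zero]

def ε (s : ZMod 2) : ZMod 3 := (-1) ^ s.val

theorem ε_add (s s' : ZMod 2) : ε (s + s') = ε s * ε s' :=
  pow_val_add (by decide) s s'

theorem ε_mul_self (s : ZMod 2) : ε s * ε s = 1 := by
  rw [← ε_add]; revert s; decide

/-- `⟨x, y, t, s⟩` stands for `z ^ t * ξ₂ ^ y * ξ₁ ^ x * w ^ s`: the triples `(x, y, t)` multiply
like the unitriangular matrices `[[1, x, t], [0, 1, y], [0, 0, 1]]` over `𝔽₃`, and `w` acts on them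
by `(x, y, t) ↦ (-x, -y, t)`. -/
@[ext]
structure HeisC2 where
  x : ZMod 3
  y : ZMod 3
  t : ZMod 3
  s : ZMod 2
deriving DecidableEq, Fintype

namespace HeisC2

instance : Mul HeisC2 :=
  ⟨fun p q => ⟨p.x + ε p.s * q.x, p.y + ε p.s * q.y, p.t + q.t + p.x * (ε p.s * q.y), p.s + q.s⟩⟩

instance : One HeisC2 := ⟨⟨0, 0, 0, 0⟩⟩

instance : Inv HeisC2 := ⟨fun p => ⟨-(ε p.s * p.x), -(ε p.s * p.y), p.x * p.y - p.t, p.s⟩⟩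

theorem mul_def (p q : HeisC2) :
    p * q = ⟨p.x + ε p.s * q.x, p.y + ε p.s * q.y, p.t + q.t + p.x * (ε p.s * q.y), p.s + q.s⟩ :=
  rfl

instance : Group HeisC2 where
  mul_assoc p q r := by
    ext <;> simp only [mul_def, ε_add]
    case t => linear_combination q.x * ε q.s * r.y * ε_mul_self p.s
    all_goals ring
  one_mul := by decide
  mul_one := by decide
  inv_mul_cancel := by decide

def gen : Fin 4 → HeisC2 := ![⟨1, 0, 0, 0⟩, ⟨0, 1, 0, 0⟩, ⟨0, 0, 0, 1⟩, ⟨0, 0, 1, 0⟩]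

theorem lift_gen_rels : ∀ r ∈ rels, FreeGroup.lift gen r = 1 := by
  simp only [rels, Set.mem_insert_iff, Set.mem_singleton_iff, forall_eq_or_imp, forall_eq,
    ξ₁, ξ₂, w, z, map_mul, map_pow, map_inv, FreeGroup.lift_apply_of]
  decide

end HeisC2

open HeisC2

def toHeisC2 : PresentedGroup rels →* HeisC2 := PresentedGroup.toGroup lift_gen_rels

def X₁ : PresentedGroup rels := .of 0
def X₂ : PresentedGroup rels := .of 1
def W : PresentedGroup rels := .of 2
def Z : PresentedGroup rels := .of 3

theorem X₁_pow_three : X₁ ^ 3 = 1 := PresentedGroup.one_of_mem (x := ξ₁ ^ 3) (by simp [rels])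
theorem X₂_pow_three : X₂ ^ 3 = 1 := PresentedGroup.one_of_mem (x := ξ₂ ^ 3) (by simp [rels])
theorem Z_pow_three : Z ^ 3 = 1 := PresentedGroup.one_of_mem (x := z ^ 3) (by simp [rels])
theorem W_pow_two : W ^ 2 = 1 := PresentedGroup.one_of_mem (x := w ^ 2) (by simp [rels])

theorem X₂_mul_X₁ : X₂ * X₁ = Z⁻¹ * X₁ * X₂ :=
  mul_inv_eq_one.mp (PresentedGroup.one_of_mem (x := ξ₂ * ξ₁ * (z⁻¹ * ξ₁ * ξ₂)⁻¹) (by simp [rels]))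

theorem W_conj_X₁ : W * X₁ * W⁻¹ = X₁⁻¹ :=
  eq_inv_of_mul_eq_one_left (PresentedGroup.one_of_mem (x := w * ξ₁ * w⁻¹ * ξ₁) (by simp [rels]))

theorem W_conj_X₂ : W * X₂ * W⁻¹ = X₂⁻¹ :=
  eq_inv_of_mul_eq_one_left (PresentedGroup.one_of_mem (x := w * ξ₂ * w⁻¹ * ξ₂) (by simp [rels]))

theorem Z_commute (h : PresentedGroup rels) : Commute Z h := by
  have hZ : Z ∈ Subgroup.center (PresentedGroup rels) := by
    rw [Subgroup.center_eq_iInf (PresentedGroup.closure_range_of rels)]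
    simp only [Subgroup.mem_iInf, Set.forall_mem_range, Subgroup.mem_centralizer_singleton_iff]
    intro i
    fin_cases i
    · exact mul_inv_eq_one.mp <|
        PresentedGroup.one_of_mem (x := z * ξ₁ * z⁻¹ * ξ₁⁻¹) (by simp [rels])
    · exact mul_inv_eq_one.mp <|
        PresentedGroup.one_of_mem (x := z * ξ₂ * z⁻¹ * ξ₂⁻¹) (by simp [rels])
    · exact mul_inv_eq_one.mp <|
        PresentedGroup.one_of_mem (x := z * w * z⁻¹ * w⁻¹) (by simp [rels])
    · rfl
  exact (Subgroup.mem_center_iff.mp hZ h).symm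

theorem X₁_mul_X₂_pow (k : ℕ) : X₁ * X₂ ^ k = Z ^ k * X₂ ^ k * X₁ := by
  have h : X₁ * X₂ * X₁⁻¹ = Z * X₂ := by
    rw [mul_inv_eq_iff_eq_mul, mul_assoc Z, X₂_mul_X₁]; group
  rw [← mul_inv_eq_iff_eq_mul, ← conj_pow, h, (Z_commute X₂).mul_pow]

theorem W_mul_pow_val {g : PresentedGroup rels} (hg : g ^ 3 = 1) (hW : W * g * W⁻¹ = g⁻¹)
    (k : ZMod 3) : W * g ^ k.val = g ^ (-k).val * W := by
  rw [← mul_inv_eq_iff_eq_mul, ← conj_pow, hW, inv_pow, pow_val_neg hg]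

def normalForm (g : HeisC2) : PresentedGroup rels :=
  Z ^ g.t.val * (X₂ ^ g.y.val * (X₁ ^ g.x.val * W ^ g.s.val))

section

variable (x y t : ZMod 3) (s : ZMod 2)

theorem X₁_mul_normalForm : X₁ * normalForm ⟨x, y, t, s⟩ = normalForm ⟨1 + x, y, t + y, s⟩ := by
  simp only [normalForm, pow_val_add Z_pow_three, pow_val_add X₁_pow_three, ZMod.val_one, pow_one]
  rw [((Z_commute X₁).pow_left _).symm.left_comm, ← mul_assoc X₁, X₁_mul_X₂_pow]
  simp only [mul_assoc]

theorem X₂_mul_normalForm : X₂ * normalForm ⟨x, y, t, s⟩ = normalForm ⟨x, 1 + y, t, s⟩ := by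
  simp only [normalForm, pow_val_add X₂_pow_three, ZMod.val_one, pow_one]
  rw [((Z_commute X₂).pow_left _).symm.left_comm, mul_assoc]

theorem W_mul_normalForm : W * normalForm ⟨x, y, t, s⟩ = normalForm ⟨-x, -y, t, 1 + s⟩ := by
  simp only [normalForm, pow_val_add W_pow_two, ZMod.val_one, pow_one]
  rw [((Z_commute W).pow_left _).symm.left_comm, ← mul_assoc W,
    W_mul_pow_val X₂_pow_three W_conj_X₂, mul_assoc, ← mul_assoc W,
    W_mul_pow_val X₁_pow_three W_conj_X₁]
  simp only [mul_assoc]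

theorem Z_mul_normalForm : Z * normalForm ⟨x, y, t, s⟩ = normalForm ⟨x, y, 1 + t, s⟩ := by
  simp only [normalForm, pow_val_add Z_pow_three, ZMod.val_one, pow_one, mul_assoc]

end

theorem gen_mul_normalForm (i : Fin 4) (g : HeisC2) :
    PresentedGroup.of i * normalForm g = normalForm (gen i * g) := by
  obtain ⟨x, y, t, s⟩ := g
  fin_cases i
  · refine (X₁_mul_normalForm x y t s).trans (congrArg normalForm ?_)
    ext <;> simp [mul_def, gen, ε]
  · refine (X₂_mul_normalForm x y t s).trans (congrArg normalForm ?_)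
    ext <;> simp [mul_def, gen, ε]
  · refine (W_mul_normalForm x y t s).trans (congrArg normalForm ?_)
    ext <;> simp [mul_def, gen, ε, ZMod.val_one]
  · refine (Z_mul_normalForm x y t s).trans (congrArg normalForm ?_)
    ext <;> simp [mul_def, gen, ε]

theorem toHeisC2_normalForm (g : HeisC2) : toHeisC2 (normalForm g) = g := by
  simp only [normalForm, map_mul, map_pow, toHeisC2, X₁, X₂, W, Z, PresentedGroup.toGroup.of]
  revert g
  decide

theorem normalForm_one : normalForm 1 = 1 := by
  simp [normalForm, show (1 : HeisC2) = ⟨0, 0, 0, 0⟩ from rfl]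

theorem card_presented_eq_54 : Nat.card (PresentedGroup rels) = 54 := by
  have hφ : Function.Bijective toHeisC2 :=
    bijective_of_equivariant_section toHeisC2 (PresentedGroup.closure_range_of rels) normalForm_one
      toHeisC2_normalForm fun i g => by
        rw [toHeisC2, PresentedGroup.toGroup.of]; exact gen_mul_normalForm i g
  rw [Nat.card_eq_of_bijective _ hφ, Nat.card_eq_fintype_card]
  rfl

end Stmt5
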